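/- Let X and Z be n × M real matrices with ZᵀX invertible, and define the just-identified instrumental-variables estimator β̂_IV(y) = (ZᵀX)⁻¹ Zᵀ y. Let K ≥ 2, r : Fin n → Fin K, l̃ : Fin K → ℝ, r̃ i = l̃ (r i), and d_k i = 1 if r i ≤ k else 0. Then β̂_IV(r̃) = (∑_{k=0}^{K−2} (l̃ k − l̃ (k+1)) · β̂_IV(d_k)) + l̃ (K−1) · (ZᵀX)⁻¹ Zᵀ 𝟙. Moreover, if the 0-th column of X is the all-ones vector (X e₀ = 𝟙), then (ZᵀX)⁻¹ Zᵀ 𝟙 = e₀, so for every m ≠ 0 we have β̂_IV(r̃)_m = ∑_{k=0}^{K−2} (l̃ k − l̃ (k+1)) · β̂_IV(d_k)_m. -/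

import Mathlib

/-!
The IV estimator is linear in the outcome, so it suffices to decompose the outcome pointwise.
Telescoping gives `l̃ j = ∑_{k ≥ j} (l̃ k - l̃ (k+1)) + l̃ (K-1)`, that is,
`r̃ = ∑_k (l̃ k - l̃ (k+1)) d_k + l̃ (K-1) 𝟙`.
For the second part, the IV estimator reproduces every outcome in the column space of `X`
exactly, and `𝟙 = X e₀`.
-/

open Matrix

/-- The just-identified instrumental-variables estimator `β̂_IV(y) = (ZᵀX)⁻¹ Zᵀ y`. -/
noncomputable def ivCoef {n M : ℕ} (Z X : Matrix (Fin n) (Fin M) ℝ) (y : Fin n → ℝ) :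
    Fin M → ℝ :=
  (Zᵀ * X)⁻¹ *ᵥ (Zᵀ *ᵥ y)

open Finset

theorem Finset.sum_range_ite_le_sub {G : Type*} [AddCommGroup G] (f : ℕ → G) {j N : ℕ}
    (hj : j ≤ N) : ∑ k ∈ range N, (if j ≤ k then f k - f (k + 1) else 0) = f j - f N := by
  rw [← sum_filter, range_eq_Ico, Ico_filter_le, Nat.zero_max, ← neg_sub, ← sum_Ico_sub f hj,
    ← sum_neg_distrib]
  simp only [neg_sub]

theorem Fin.eq_sum_ite_le_sub_add_last {R : Type*} [Ring R] {K : ℕ} (hK : 0 < K) (l : Fin K → R)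
    (j : Fin K) :
    l j = ∑ k : Fin (K - 1), (l (Fin.castLE (by omega) k) - l (Fin.cast (by omega) k.succ)) *
        (if (j : ℕ) ≤ (k : ℕ) then 1 else 0) + l ⟨K - 1, by omega⟩ := by
  set f : ℕ → R := fun k => l ⟨min k (K - 1), by omega⟩
  have hf : ∀ k : Fin K, f k = l k := fun k => congrArg l (Fin.ext (min_eq_left (by omega)))
  have hsum :=
    Fin.sum_univ_eq_sum_range (fun k => if (j : ℕ) ≤ k then f k - f (k + 1) else 0) (K - 1)
  have htop : f (K - 1) = l ⟨K - 1, by omega⟩ := congrArg l (Fin.ext (min_self _))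
  rw [Finset.sum_range_ite_le_sub f (by omega), hf, htop] at hsum
  rw [← sub_eq_iff_eq_add, ← hsum]
  refine Finset.sum_congr rfl fun k _ => ?_
  rw [mul_ite, mul_one, mul_zero, ← hf, ← hf]
  rfl

theorem ivCoef_eq_mulVec {n M : ℕ} (Z X : Matrix (Fin n) (Fin M) ℝ) (y : Fin n → ℝ) :
    ivCoef Z X y = ((Zᵀ * X)⁻¹ * Zᵀ) *ᵥ y := by
  rw [ivCoef, mulVec_mulVec]

theorem ivCoef_add {n M : ℕ} (Z X : Matrix (Fin n) (Fin M) ℝ) (y y' : Fin n → ℝ) :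
    ivCoef Z X (y + y') = ivCoef Z X y + ivCoef Z X y' := by
  simp only [ivCoef_eq_mulVec, mulVec_add]

theorem ivCoef_smul {n M : ℕ} (Z X : Matrix (Fin n) (Fin M) ℝ) (c : ℝ) (y : Fin n → ℝ) :
    ivCoef Z X (c • y) = c • ivCoef Z X y := by
  simp only [ivCoef_eq_mulVec, mulVec_smul]

theorem ivCoef_sum {n M : ℕ} {ι : Type*} (Z X : Matrix (Fin n) (Fin M) ℝ) (s : Finset ι)
    (y : ι → Fin n → ℝ) :
    ivCoef Z X (∑ i ∈ s, y i) = ∑ i ∈ s, ivCoef Z X (y i) := by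
  simp only [ivCoef_eq_mulVec, ← mulVecLin_apply, map_sum]

theorem ivCoef_mulVec {n M : ℕ} {Z X : Matrix (Fin n) (Fin M) ℝ} (hZX : IsUnit (Zᵀ * X))
    (b : Fin M → ℝ) : ivCoef Z X (X *ᵥ b) = b := by
  rw [ivCoef, mulVec_mulVec, mulVec_mulVec, Matrix.mul_assoc,
    nonsing_inv_mul _ ((isUnit_iff_isUnit_det _).mp hZX), one_mulVec]

theorem ivCoef_label_eq_sum_dichotomize {n M K : ℕ} (hK : 0 < K)
    (Z X : Matrix (Fin n) (Fin M) ℝ) (r : Fin n → Fin K) (l : Fin K → ℝ) :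
    ivCoef Z X (fun i => l (r i)) =
      (∑ k : Fin (K - 1), (l (Fin.castLE (by omega) k) - l (Fin.cast (by omega) k.succ)) •
          ivCoef Z X (fun i => if (r i : ℕ) ≤ (k : ℕ) then (1 : ℝ) else 0)) +
        l ⟨K - 1, by omega⟩ • ivCoef Z X (fun _ => 1) := by
  have hlabel : (fun i => l (r i)) =
      (∑ k : Fin (K - 1), (l (Fin.castLE (by omega) k) - l (Fin.cast (by omega) k.succ)) •
          (fun i => if (r i : ℕ) ≤ (k : ℕ) then (1 : ℝ) else 0)) +
        l ⟨K - 1, by omega⟩ • (fun _ => 1) := by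
    funext i
    simpa only [Pi.add_apply, Finset.sum_apply, Pi.smul_apply, smul_eq_mul, mul_one]
      using Fin.eq_sum_ite_le_sub_add_last hK l (r i)
  simp only [hlabel, ivCoef_add, ivCoef_sum, ivCoef_smul]

/-- Decomposition of the IV coefficient vector of the transformed
outcome into a weighted sum of IV coefficients of the dichotomizations plus a
constant term; moreover, if the 0-th column of `X` is the all-ones vector, the
constant term is the standard basis vector `e₀`, so all coefficients with index
`m ≠ 0` are purely the weighted sums. -/
theorem stmt_5 (n M K : ℕ) [NeZero M] (hK : 2 ≤ K)
    (Z X : Matrix (Fin n) (Fin M) ℝ) (hZX : IsUnit (Zᵀ * X))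
    (r : Fin n → Fin K) (l : Fin K → ℝ) :
    (ivCoef Z X (fun i => l (r i)) =
      (∑ k : Fin (K - 1),
        (l (Fin.castLE (by omega) k) - l (Fin.cast (by omega) k.succ)) •
          ivCoef Z X (fun i => if (r i : ℕ) ≤ (k : ℕ) then (1 : ℝ) else 0)) +
      l ⟨K - 1, by omega⟩ • ((Zᵀ * X)⁻¹ *ᵥ (Zᵀ *ᵥ fun _ => (1 : ℝ)))) ∧
    (X *ᵥ Pi.single (0 : Fin M) 1 = (fun _ => (1 : ℝ)) →
      ((Zᵀ * X)⁻¹ *ᵥ (Zᵀ *ᵥ fun _ => (1 : ℝ))) = Pi.single (0 : Fin M) 1 ∧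
      ∀ m : Fin M, m ≠ 0 →
        ivCoef Z X (fun i => l (r i)) m =
          ∑ k : Fin (K - 1),
            (l (Fin.castLE (by omega) k) - l (Fin.cast (by omega) k.succ)) *
              ivCoef Z X (fun i => if (r i : ℕ) ≤ (k : ℕ) then (1 : ℝ) else 0) m) := by
  have hdecomp := ivCoef_label_eq_sum_dichotomize (by omega) Z X r l
  refine ⟨hdecomp, fun hX => ?_⟩
  have hconst : ivCoef Z X (fun _ => 1) = Pi.single 0 1 := by
    rw [← hX, ivCoef_mulVec hZX]
  refine ⟨hconst, fun m hm => ?_⟩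
  simpa only [hconst, Pi.add_apply, Finset.sum_apply, Pi.smul_apply, smul_eq_mul,
    Pi.single_eq_of_ne hm, mul_zero, add_zero] using congrFun hdecomp m
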